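/- arXiv:2104.04330 — 8 statements merged into one kernel-verified Lean document; each statement's English description precedes it below -/
import Mathlib

section
/- Let p, q, r be monic polynomials in ℤ[x] with p = q·r. Then p is type 2 (i.e., writing p(x) = Σ aᵢ x^(n−i) with a₀ = 1, 2^i divides aᵢ for all i ≥ 0) if and only if both q and r are type 2. -/
open Polynomial

/-- A monic polynomial `p = Σ aᵢ x^(n-i)` in `ℤ[x]` is *type 2* if `2^i ∣ aᵢ`
for all `i ≥ 0`, i.e. `2^(n-j) ∣ coeff p j` for all `j ≤ n`. -/
def IsType2 (p : Polynomial ℤ) : Prop :=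
  ∀ j ≤ p.natDegree, (2 : ℤ) ^ (p.natDegree - j) ∣ p.coeff j

lemma coeff_comp_two_mul_X (p : Polynomial ℤ) (j : ℕ) :
    (p.comp (C 2 * X)).coeff j = 2 ^ j * p.coeff j := by
  induction p using Polynomial.induction_on' with
  | add f g hf hg => simp only [add_comp, coeff_add, hf, hg, mul_add]
  | monomial n c =>
      simp only [monomial_comp, coeff_monomial, mul_pow, ← C_pow, ← mul_assoc, ← C_mul,
        coeff_C_mul, coeff_X_pow]
      rcases eq_or_ne n j with h | h
      · simp [h]; ring
      · simp [h, Ne.symm h]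

lemma isType2_iff_dvd (p : Polynomial ℤ) :
    IsType2 p ↔ (2 : ℤ) ^ p.natDegree ∣ (p.comp (C 2 * X)).content := by
  rw [dvd_content_iff_C_dvd, C_dvd_iff_dvd_coeff]
  constructor
  · intro h i
    rw [coeff_comp_two_mul_X]
    rcases le_or_gt i p.natDegree with hi | hi
    · obtain ⟨c, hc⟩ := h i hi
      refine ⟨c, ?_⟩
      rw [hc, ← mul_assoc, ← pow_add]
      congr 2
      omega
    · rw [coeff_eq_zero_of_natDegree_lt hi, mul_zero]; exact dvd_zero _
  · intro h j hj
    have := h j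
    rw [coeff_comp_two_mul_X] at this
    have h2 : (2:ℤ) ^ (p.natDegree - j) * 2 ^ j ∣ 2 ^ j * p.coeff j := by
      rw [← pow_add]
      have : p.natDegree - j + j = p.natDegree := by omega
      rw [this]; exact ‹(2:ℤ) ^ p.natDegree ∣ 2 ^ j * p.coeff j›
    rw [mul_comm ((2:ℤ)^(p.natDegree - j))] at h2
    exact (mul_dvd_mul_iff_left (by positivity : ((2:ℤ)^j) ≠ 0)).mp h2

lemma content_comp_dvd (q : Polynomial ℤ) (hq : q.Monic) :
    (q.comp (C 2 * X)).content ∣ 2 ^ q.natDegree := by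
  have := content_dvd_coeff (p := q.comp (C 2 * X)) q.natDegree
  rwa [coeff_comp_two_mul_X, hq.coeff_natDegree, mul_one] at this

theorem type2_mul_iff (p q r : Polynomial ℤ)
    (hp : p.Monic) (hq : q.Monic) (hr : r.Monic) (hpqr : p = q * r) :
    IsType2 p ↔ IsType2 q ∧ IsType2 r := by
  have hdeg : p.natDegree = q.natDegree + r.natDegree := by
    rw [hpqr]; exact hq.natDegree_mul hr
  have hcomp : p.comp (C 2 * X) = q.comp (C 2 * X) * r.comp (C 2 * X) := by
    rw [hpqr, mul_comp]
  rw [isType2_iff_dvd, isType2_iff_dvd, isType2_iff_dvd, hdeg, hcomp, content_mul]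
  set a := (q.comp (C 2 * X)).content with ha
  set b := (r.comp (C 2 * X)).content with hb
  constructor
  · intro h
    have habs : ∀ n : ℕ, ((2:ℤ) ^ n).natAbs = 2 ^ n := by
      intro n; rw [Int.natAbs_pow]; rfl
    have haN : a.natAbs ∣ 2 ^ q.natDegree := by
      have h' := Int.natAbs_dvd_natAbs.mpr (content_comp_dvd q hq)
      rwa [habs] at h'
    have hbN : b.natAbs ∣ 2 ^ r.natDegree := by
      have h' := Int.natAbs_dvd_natAbs.mpr (content_comp_dvd r hr)
      rwa [habs] at h'
    obtain ⟨i, him, hia⟩ := (Nat.dvd_prime_pow Nat.prime_two).mp haN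
    obtain ⟨j, hjk, hjb⟩ := (Nat.dvd_prime_pow Nat.prime_two).mp hbN
    have hN : 2 ^ (q.natDegree + r.natDegree) ∣ (a * b).natAbs := by
      have h' := Int.natAbs_dvd_natAbs.mpr h
      rwa [habs] at h'
    rw [Int.natAbs_mul, hia, hjb, ← pow_add] at hN
    have hle : q.natDegree + r.natDegree ≤ i + j :=
      (Nat.pow_dvd_pow_iff_le_right Nat.one_lt_two).mp hN
    have hi : i = q.natDegree := by omega
    have hj : j = r.natDegree := by omega
    constructor
    · rw [← Int.natAbs_dvd_natAbs, hia, hi, habs]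
    · rw [← Int.natAbs_dvd_natAbs, hjb, hj, habs]
  · intro ⟨h1, h2⟩
    rw [pow_add]
    exact mul_dvd_mul h1 h2
end

section
/- Let p, q, r be monic polynomials in ℤ[x] with p = q·r. Then p is weakly type 2 if and only if q and r are both weakly type 2 and at least one of them is type 2. -/
open Polynomial

/-- A monic polynomial `p = Σ aᵢ x^(n-i)` in `ℤ[x]` is *weakly type 2* if
`2^(i-1) ∣ aᵢ` for all `i ≥ 1`, i.e. `2^(n-j-1) ∣ coeff p j` for all `j < n`. -/
def IsWeaklyType2 (p : Polynomial ℤ) : Prop :=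
  ∀ j < p.natDegree, (2 : ℤ) ^ (p.natDegree - j - 1) ∣ p.coeff j

/-!
Substituting `2X` multiplies the coefficient of `Xʲ` by `2ʲ`, so that a monic `s` of degree `n` is
type 2 exactly when `2ⁿ` divides the content of `s(2X)`, and weakly type 2 exactly when `2ⁿ⁻¹`
does. By Gauss's lemma the 2-adic valuation `v` of that content is additive on products, and
`v(s) ≤ n` because `s(2X)` has leading coefficient `2ⁿ`. For `p = q r` the theorem then becomes
the statement about natural numbers `v(q) ≤ deg q`, `v(r) ≤ deg r`:
`deg q + deg r - 1 ≤ v(q) + v(r)` iff `deg q - 1 ≤ v(q)`, `deg r - 1 ≤ v(r)` and one of these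
inequalities holds without the `- 1`.
-/

theorem Polynomial.pow_dvd_content_comp_C_mul_X_iff {R : Type*} [CommRing R] [IsDomain R]
    [NormalizedGCDMonoid R] (s : R[X]) {a : R} (ha : a ≠ 0) (m : ℕ) :
    a ^ m ∣ (s.comp (C a * X)).content ↔ ∀ j, a ^ (m - j) ∣ s.coeff j := by
  rw [dvd_content_iff_C_dvd, C_dvd_iff_dvd_coeff]
  refine forall_congr' fun j ↦ ?_
  rw [comp_C_mul_X_coeff]
  rcases le_total j m with hjm | hmj
  · rw [← Nat.sub_add_cancel hjm, pow_add, Nat.add_sub_cancel]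
    exact mul_dvd_mul_iff_right (pow_ne_zero j ha)
  · rw [Nat.sub_eq_zero_of_le hmj, pow_zero]
    exact iff_of_true (Dvd.dvd.mul_left (pow_dvd_pow a hmj) _) (one_dvd _)

noncomputable def scaledContentVal (ℓ : ℕ) (s : ℤ[X]) : ℕ :=
  padicValInt ℓ (s.comp (C (ℓ : ℤ) * X)).content

section scaledContentVal

variable {ℓ : ℕ} [Fact ℓ.Prime]

theorem content_comp_C_mul_X_ne_zero {s : ℤ[X]} (hs : s ≠ 0) :
    (s.comp (C (ℓ : ℤ) * X)).content ≠ 0 := by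
  rw [Ne, content_eq_zero_iff,
    comp_C_mul_X_eq_zero_iff (mem_nonZeroDivisors_of_ne_zero (by exact_mod_cast
      (Fact.out : ℓ.Prime).ne_zero))]
  exact hs

theorem pow_dvd_content_comp_iff_le_scaledContentVal {s : ℤ[X]} (hs : s ≠ 0) (k : ℕ) :
    (ℓ : ℤ) ^ k ∣ (s.comp (C (ℓ : ℤ) * X)).content ↔ k ≤ scaledContentVal ℓ s := by
  rw [padicValInt_dvd_iff, or_iff_right (content_comp_C_mul_X_ne_zero hs), scaledContentVal]

theorem scaledContentVal_mul {q r : ℤ[X]} (hq : q ≠ 0) (hr : r ≠ 0) :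
    scaledContentVal ℓ (q * r) = scaledContentVal ℓ q + scaledContentVal ℓ r := by
  rw [scaledContentVal, mul_comp, content_mul,
    padicValInt.mul (content_comp_C_mul_X_ne_zero (ℓ := ℓ) hq) (content_comp_C_mul_X_ne_zero hr)]
  rfl

theorem scaledContentVal_le_natDegree {s : ℤ[X]} (hs : s.Monic) :
    scaledContentVal ℓ s ≤ s.natDegree := by
  have hdvd := (pow_dvd_content_comp_iff_le_scaledContentVal (ℓ := ℓ) hs.ne_zero _).mpr le_rfl
  rw [pow_dvd_content_comp_C_mul_X_iff s (by exact_mod_cast (Fact.out : ℓ.Prime).ne_zero)] at hdvd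
  have hlead := hdvd s.natDegree
  rw [hs.coeff_natDegree] at hlead
  by_contra! hlt
  exact (Nat.prime_iff_prime_int.mp Fact.out).not_dvd_one
    ((dvd_pow_self _ (Nat.sub_ne_zero_of_lt hlt)).trans hlead)

end scaledContentVal

theorem isType2_iff_natDegree_le_scaledContentVal {s : ℤ[X]} (hs : s ≠ 0) :
    IsType2 s ↔ s.natDegree ≤ scaledContentVal 2 s := by
  rw [← pow_dvd_content_comp_iff_le_scaledContentVal hs, Nat.cast_ofNat,
    pow_dvd_content_comp_C_mul_X_iff s two_ne_zero]
  refine ⟨fun h j ↦ ?_, fun h j _ ↦ h j⟩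
  rcases le_or_gt j s.natDegree with hj | hj
  · exact h j hj
  · rw [coeff_eq_zero_of_natDegree_lt hj]
    exact dvd_zero _

theorem isWeaklyType2_iff_natDegree_sub_one_le_scaledContentVal {s : ℤ[X]} (hs : s ≠ 0) :
    IsWeaklyType2 s ↔ s.natDegree - 1 ≤ scaledContentVal 2 s := by
  rw [← pow_dvd_content_comp_iff_le_scaledContentVal hs, Nat.cast_ofNat,
    pow_dvd_content_comp_C_mul_X_iff s two_ne_zero]
  refine ⟨fun h j ↦ ?_, fun h j _ ↦ by rw [Nat.sub_right_comm]; exact h j⟩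
  rcases lt_or_ge j s.natDegree with hj | hj
  · rw [Nat.sub_right_comm]
    exact h j hj
  · rw [Nat.sub_eq_zero_of_le (by omega), pow_zero]
    exact one_dvd _

theorem weaklyType2_mul_iff_general (p q r : Polynomial ℤ)
    (hq : q.Monic) (hr : r.Monic) (hpqr : p = q * r) :
    IsWeaklyType2 p ↔
      (IsWeaklyType2 q ∧ IsWeaklyType2 r) ∧ (IsType2 q ∨ IsType2 r) := by
  subst hpqr
  have hdeg := hq.natDegree_mul hr
  have hv := scaledContentVal_mul (ℓ := 2) hq.ne_zero hr.ne_zero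
  have hvq := scaledContentVal_le_natDegree (ℓ := 2) hq
  have hvr := scaledContentVal_le_natDegree (ℓ := 2) hr
  rw [isWeaklyType2_iff_natDegree_sub_one_le_scaledContentVal (hq.mul hr).ne_zero,
    isWeaklyType2_iff_natDegree_sub_one_le_scaledContentVal hq.ne_zero,
    isWeaklyType2_iff_natDegree_sub_one_le_scaledContentVal hr.ne_zero,
    isType2_iff_natDegree_le_scaledContentVal hq.ne_zero,
    isType2_iff_natDegree_le_scaledContentVal hr.ne_zero]
  omega

theorem weaklyType2_mul_iff (p q r : Polynomial ℤ)
    (hp : p.Monic) (hq : q.Monic) (hr : r.Monic) (hpqr : p = q * r) :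
    IsWeaklyType2 p ↔
      (IsWeaklyType2 q ∧ IsWeaklyType2 r) ∧ (IsType2 q ∨ IsType2 r) :=
  weaklyType2_mul_iff_general p q r hq hr hpqr
end

section
/- Let M be a real symmetric n×n matrix. For each i ∈ {1,…,n}, the characteristic polynomial of the principal submatrix M[i] obtained by deleting the i-th row and column satisfies Char_{M[i]}(x) = Char_M(x) · Σ_{λ ∈ Λ(M)} α_λ²(i)/(x−λ), where Λ(M) is the set of distinct eigenvalues of M and α_λ(i) = ‖P_λ e_i‖ with P_λ the orthogonal projection onto the λ-eigenspace. -/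
/-!
Expanding the determinant of `charmatrix M` along row `i` identifies the characteristic
polynomial of `M[i]` with the diagonal entry `adj(X - M) i i`. If `M = U D Uᴴ` with `U`
unitary and `D = diag(d)`, then `adj(X - M) = U adj(X - D) Uᴴ`, whose `(i, i)` entry is
`∑ⱼ |U i j|² ∏_{k ≠ j} (X - d k) = ∑ⱼ |U i j|² Char_M / (X - d j)`. Grouping the columns of `U`
(an orthonormal eigenbasis) by eigenvalue, `∑_{d j = λ} |U i j|² = ‖P_λ eᵢ‖²`, because those
columns form an orthonormal basis of the `λ`-eigenspace.
-/

open Polynomial Module.End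

namespace Matrix

variable {R : Type*} [CommRing R] {n m : Type*} [Fintype n] [DecidableEq n]
  [Fintype m] [DecidableEq m]

theorem map_mul_map_eq_one {S : Type*} [CommRing S] (f : R →+* S) {U V : Matrix n n R}
    (h : U * V = 1) : U.map f * V.map f = 1 := by
  rw [← Matrix.map_mul, h, Matrix.map_one _ (map_zero f) (map_one f)]

theorem adjugate_conj_of_mul_eq_one {U V : Matrix n n R} (h : U * V = 1) (A : Matrix n n R) :
    adjugate (U * A * V) = U * adjugate A * V := by
  have hVU : V * U = 1 := mul_eq_one_comm.mp h
  have hdet : U.det * V.det = 1 := by rw [← det_mul, h, det_one]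
  have hU : adjugate U = U.det • V := by
    rw [← one_mul (adjugate U), ← hVU, mul_assoc, mul_adjugate, Matrix.mul_smul, mul_one]
  have hV : adjugate V = V.det • U := by
    rw [← one_mul (adjugate V), ← h, mul_assoc, mul_adjugate, Matrix.mul_smul, mul_one]
  simp only [adjugate_mul_distrib, hU, hV, Matrix.smul_mul, Matrix.mul_smul, smul_smul, hdet,
    one_smul, mul_assoc]

theorem charmatrix_conj_of_mul_eq_one {U V : Matrix n n R} (h : U * V = 1) (A : Matrix n n R) :
    charmatrix (U * A * V) = U.map C * charmatrix A * V.map C := by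
  have hX : U.map C * scalar n X * V.map C = scalar n (X : R[X]) := by
    rw [scalar_apply, ← smul_one_eq_diagonal, Matrix.mul_smul, mul_one, Matrix.smul_mul,
      map_mul_map_eq_one C h]
  rw [charmatrix, charmatrix, Matrix.mul_sub, Matrix.sub_mul, hX, RingHom.mapMatrix_apply,
    RingHom.mapMatrix_apply, Matrix.map_mul, Matrix.map_mul]

theorem charmatrix_submatrix (A : Matrix m m R) {e : n → m} (he : Function.Injective e) :
    charmatrix (A.submatrix e e) = (charmatrix A).submatrix e e := by
  ext a b
  by_cases hab : a = b
  · subst hab; simp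
  · simp [charmatrix_apply_ne _ _ _ hab, charmatrix_apply_ne _ _ _ (he.ne hab)]

theorem charpoly_submatrix_succAbove {k : ℕ} (A : Matrix (Fin (k + 1)) (Fin (k + 1)) R)
    (i : Fin (k + 1)) :
    (A.submatrix i.succAbove i.succAbove).charpoly = (charmatrix A).adjugate i i := by
  rw [adjugate_fin_succ_eq_det_submatrix, charpoly,
    charmatrix_submatrix _ i.succAbove_right_injective, Even.neg_one_pow ⟨i, rfl⟩, one_mul]

end Matrix

namespace LinearMap.IsSymmetric

variable {𝕜 E ι : Type*} [RCLike 𝕜] [NormedAddCommGroup E] [InnerProductSpace 𝕜 E]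
  [FiniteDimensional 𝕜 E] [Fintype ι] [DecidableEq 𝕜] {T : E →ₗ[𝕜] E}

theorem starProjection_eigenspace_eq_sum (hT : T.IsSymmetric) (b : OrthonormalBasis ι 𝕜 E)
    {d : ι → 𝕜} (hb : ∀ j, T (b j) = d j • b j) (μ : 𝕜) (x : E) :
    (eigenspace T μ).starProjection x = ∑ j with d j = μ, inner 𝕜 (b j) x • b j := by
  have hmem : ∀ j, b j ∈ eigenspace T (d j) := fun j => mem_eigenspace_iff.mpr (hb j)
  refine Submodule.eq_starProjection_of_mem_of_inner_eq_zero ?_ fun u hu => ?_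
  · refine Submodule.sum_mem _ fun j hj => Submodule.smul_mem _ _ ?_
    exact (Finset.mem_filter.mp hj).2 ▸ hmem j
  · have hsplit : x - ∑ j with d j = μ, inner 𝕜 (b j) x • b j
        = ∑ j with ¬d j = μ, inner 𝕜 (b j) x • b j := by
      rw [sub_eq_iff_eq_add', Finset.sum_filter_add_sum_filter_not, b.sum_repr']
    rw [hsplit, sum_inner]
    refine Finset.sum_eq_zero fun j hj => ?_
    have horth : inner 𝕜 (b j) u = 0 :=
      hT.orthogonalFamily_eigenspaces (Finset.mem_filter.mp hj).2 ⟨b j, hmem j⟩ ⟨u, hu⟩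
    rw [inner_smul_left, horth, mul_zero]

theorem norm_starProjection_eigenspace_sq (hT : T.IsSymmetric) (b : OrthonormalBasis ι 𝕜 E)
    {d : ι → 𝕜} (hb : ∀ j, T (b j) = d j • b j) (μ : 𝕜) (x : E) :
    ‖(eigenspace T μ).starProjection x‖ ^ 2 = ∑ j with d j = μ, ‖inner 𝕜 (b j) x‖ ^ 2 := by
  rw [hT.starProjection_eigenspace_eq_sum b hb]
  have h := inner_self_eq_norm_sq_to_K (𝕜 := 𝕜) (∑ j with d j = μ, inner 𝕜 (b j) x • b j)
  rw [b.orthonormal.inner_sum] at h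
  simp only [RCLike.conj_mul] at h
  exact_mod_cast h.symm

end LinearMap.IsSymmetric

namespace Matrix.IsHermitian

variable {𝕜 n : Type*} [RCLike 𝕜] [Fintype n] [DecidableEq n] {A : Matrix n n 𝕜}

theorem charmatrix_eq_conj_diagonal (hA : A.IsHermitian) :
    A.charmatrix = (hA.eigenvectorUnitary : Matrix n n 𝕜).map C *
      diagonal (fun j => X - C (hA.eigenvalues j : 𝕜)) *
      (star (hA.eigenvectorUnitary : Matrix n n 𝕜)).map C := by
  conv_lhs => rw [hA.spectral_theorem, Unitary.conjStarAlgAut_apply]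
  rw [charmatrix_conj_of_mul_eq_one (Unitary.mul_star_self_of_mem (SetLike.coe_mem _)),
    charmatrix_diagonal]
  rfl

theorem charpoly_divByMonic_eigenvalue (hA : A.IsHermitian) (j : n) :
    A.charpoly /ₘ (X - C (hA.eigenvalues j : 𝕜)) =
      ∏ k ∈ Finset.univ.erase j, (X - C (hA.eigenvalues k : 𝕜)) := by
  rw [hA.charpoly_eq, ← Finset.mul_prod_erase _ _ (Finset.mem_univ j),
    mul_divByMonic_cancel_left _ (monic_X_sub_C _)]

theorem adjugate_charmatrix_apply_self (hA : A.IsHermitian) (i : n) :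
    A.charmatrix.adjugate i i = ∑ j, C ((‖hA.eigenvectorBasis j i‖ ^ 2 : ℝ) : 𝕜) *
      (A.charpoly /ₘ (X - C (hA.eigenvalues j : 𝕜))) := by
  have hU := map_mul_map_eq_one C (Unitary.mul_star_self_of_mem hA.eigenvectorUnitary.2)
  rw [hA.charmatrix_eq_conj_diagonal, adjugate_conj_of_mul_eq_one hU, adjugate_diagonal,
    mul_apply]
  refine Finset.sum_congr rfl fun j _ => ?_
  rw [mul_diagonal, map_apply, map_apply, star_apply, eigenvectorUnitary_apply,
    hA.charpoly_divByMonic_eigenvalue, RCLike.star_def, RCLike.ofReal_pow, ← RCLike.mul_conj,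
    C_mul]
  ring

theorem toEuclideanLin_eigenvectorBasis (hA : A.IsHermitian) (j : n) :
    toEuclideanLin A (hA.eigenvectorBasis j) =
      (hA.eigenvalues j : 𝕜) • hA.eigenvectorBasis j := by
  ext k
  rw [ofLp_toLpLin, toLin'_apply, hA.mulVec_eigenvectorBasis]
  simp [RCLike.real_smul_eq_coe_mul]

theorem norm_orthogonalProjectionOnto_eigenspace_single_sq [DecidableEq 𝕜] (hA : A.IsHermitian)
    (μ : 𝕜) (i : n) :
    ‖((eigenspace (toEuclideanLin A) μ).orthogonalProjectionOnto (EuclideanSpace.single i 1) :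
      EuclideanSpace 𝕜 n)‖ ^ 2 =
      ∑ j with (hA.eigenvalues j : 𝕜) = μ, ‖hA.eigenvectorBasis j i‖ ^ 2 := by
  rw [← Submodule.starProjection_apply,
    (isSymmetric_toEuclideanLin_iff.mpr hA).norm_starProjection_eigenspace_sq
      hA.eigenvectorBasis hA.toEuclideanLin_eigenvectorBasis]
  simp [EuclideanSpace.inner_single_right]

theorem toFinset_roots_charpoly (hA : A.IsHermitian) :
    A.charpoly.roots.toFinset = Finset.univ.image (fun j => (hA.eigenvalues j : 𝕜)) := by
  rw [hA.roots_charpoly_eq_eigenvalues]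
  rfl

end Matrix.IsHermitian

theorem charpoly_submatrix_eq_sum_angles (n : ℕ)
    (M : Matrix (Fin (n + 1)) (Fin (n + 1)) ℝ) (hM : M.IsSymm) (i : Fin (n + 1)) :
    (M.submatrix i.succAbove i.succAbove).charpoly =
      ∑ lam ∈ M.charpoly.roots.toFinset,
        Polynomial.C
          (‖(Submodule.orthogonalProjectionOnto
              (Module.End.eigenspace (Matrix.toEuclideanLin M) lam)
              (EuclideanSpace.single i (1 : ℝ)) : EuclideanSpace ℝ (Fin (n + 1)))‖ ^ 2)
          * (M.charpoly /ₘ (X - C lam)) := by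
  have hA : M.IsHermitian := Matrix.isHermitian_iff_isSymm.mpr hM
  rw [M.charpoly_submatrix_succAbove, hA.adjugate_charmatrix_apply_self,
    hA.toFinset_roots_charpoly]
  simp only [RCLike.ofReal_real_eq_id, id]
  rw [← Finset.sum_fiberwise_of_maps_to (g := hA.eigenvalues)
    fun j _ => Finset.mem_image_of_mem _ (Finset.mem_univ j)]
  refine Finset.sum_congr rfl fun lam _ => ?_
  rw [hA.norm_orthogonalProjectionOnto_eigenspace_single_sq, map_sum, Finset.sum_mul]
  refine Finset.sum_congr rfl fun j hj => ?_
  rw [← (Finset.mem_filter.mp hj).2]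
  rfl
end

section
/- Let M be a real symmetric matrix of order n with eigenvalue λ of multiplicity m. Suppose there is a k-element subset I of {1,…,n} such that for each i ∈ I, the principal submatrix M[i] (deleting row and column i) has λ as an eigenvalue with multiplicity m or m+1. Then M has a principal submatrix of order n−k (obtained by deleting the rows and columns indexed by I) that has λ as an eigenvalue with multiplicity at least m. -/
open Matrix Module

private def extMap {n : ℕ} (i : Fin n) : ({j : Fin n // j ≠ i} → ℝ) →ₗ[ℝ] (Fin n → ℝ) where
  toFun w j := if h : j = i then 0 else w ⟨j, h⟩
  map_add' w w' := by funext j; by_cases h : j = i <;> simp [h]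
  map_smul' c w := by funext j; by_cases h : j = i <;> simp [h]

private lemma extMap_apply_ne {n : ℕ} (i : Fin n) (w : {j : Fin n // j ≠ i} → ℝ)
    (j : Fin n) (h : j ≠ i) : extMap i w j = w ⟨j, h⟩ := by
  simp [extMap, h]

private lemma extMap_apply_self {n : ℕ} (i : Fin n) (w : {j : Fin n // j ≠ i} → ℝ) :
    extMap i w i = 0 := by simp [extMap]

private lemma key {n : ℕ} (M : Matrix (Fin n) (Fin n) ℝ) (hM : M.IsSymm) (lam : ℝ)
    (i : Fin n) (v : Fin n → ℝ)
    (hv : v ∈ Module.End.eigenspace (Matrix.toLin' M) lam) (hvi : v i ≠ 0) :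
    Module.finrank ℝ ↥(Module.End.eigenspace (Matrix.toLin'
      (M.submatrix (fun x : {j : Fin n // j ≠ i} => (x : Fin n))
        (fun x : {j : Fin n // j ≠ i} => (x : Fin n)))) lam)
      < Module.finrank ℝ ↥(Module.End.eigenspace (Matrix.toLin' M) lam) := by
  set K := Module.End.eigenspace (Matrix.toLin' M) lam with hK
  set S : Submodule ℝ (Fin n → ℝ) := K ⊓ LinearMap.ker (LinearMap.proj i) with hS
  have hvmul : M.mulVec v = lam • v := by
    rw [hK, Module.End.mem_eigenspace_iff, Matrix.toLin'_apply] at hv; exact hv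
  have step1 : ∀ w ∈ Module.End.eigenspace (Matrix.toLin'
      (M.submatrix (fun x : {j : Fin n // j ≠ i} => (x : Fin n))
        (fun x : {j : Fin n // j ≠ i} => (x : Fin n)))) lam, extMap i w ∈ S := by
    intro w hw
    rw [Module.End.mem_eigenspace_iff, Matrix.toLin'_apply] at hw
    set u := extMap i w with hu
    have hui : u i = 0 := extMap_apply_self i w
    have hcoe : ∀ l : {l : Fin n // l ≠ i}, u ↑l = w l := fun l => extMap_apply_ne i w l l.2
    have hb : ∀ j : Fin n, j ≠ i → M.mulVec u j = lam * u j := by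
      intro j hj
      have e0 : M.mulVec u j = ∑ l : Fin n, M j l * u l := by
        simp [Matrix.mulVec, dotProduct]
      have e1 : ∑ l : Fin n, M j l * u l = ∑ l ∈ Finset.univ.erase i, M j l * u l := by
        rw [Finset.sum_erase _ (by rw [hui]; ring)]
      have e2 : ∑ l ∈ Finset.univ.erase i, M j l * u l
          = ∑ l : {l : Fin n // l ≠ i}, M j ↑l * u ↑l :=
        Finset.sum_subtype _ (fun x => by simp [Finset.mem_erase]) _
      have e3 : ∑ l : {l : Fin n // l ≠ i}, M j ↑l * u ↑l
          = ((M.submatrix (fun x : {j : Fin n // j ≠ i} => (x : Fin n))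
              (fun x : {j : Fin n // j ≠ i} => (x : Fin n))).mulVec w) ⟨j, hj⟩ := by
        simp [Matrix.mulVec, dotProduct, Matrix.submatrix, hcoe]
      rw [e0, e1, e2, e3, hw]
      simp [hcoe ⟨j, hj⟩]
    have hdot : v ⬝ᵥ M.mulVec u = lam * (v ⬝ᵥ u) := by
      rw [Matrix.dotProduct_mulVec, ← Matrix.mulVec_transpose, hM.eq, hvmul,
        smul_dotProduct, smul_eq_mul]
    have hexp : v ⬝ᵥ M.mulVec u - lam * (v ⬝ᵥ u) = v i * M.mulVec u i := by
      have : v ⬝ᵥ M.mulVec u - lam * (v ⬝ᵥ u)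
          = ∑ j : Fin n, (v j * M.mulVec u j - lam * (v j * u j)) := by
        simp [dotProduct, Finset.mul_sum, Finset.sum_sub_distrib]
      rw [this, Finset.sum_eq_single i]
      · rw [hui]; ring
      · intro j _ hj; rw [hb j hj]; ring
      · intro h; exact absurd (Finset.mem_univ i) h
    have hci : M.mulVec u i = 0 := by
      have h0 : v i * M.mulVec u i = 0 := by rw [← hexp, hdot]; ring
      exact (mul_eq_zero.mp h0).resolve_left hvi
    refine Submodule.mem_inf.mpr ⟨?_, ?_⟩
    · rw [hK, Module.End.mem_eigenspace_iff, Matrix.toLin'_apply]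
      funext j
      by_cases h : j = i
      · subst h; rw [hci]; simp [hui]
      · simpa using hb j h
    · simpa using hui
  have φinj : Function.Injective (extMap (n := n) i) := by
    intro w w' h
    funext l
    have := congrFun h ↑l
    rwa [extMap_apply_ne i w l l.2, extMap_apply_ne i w' l l.2] at this
  have h1 : Module.finrank ℝ ↥(Module.End.eigenspace (Matrix.toLin'
      (M.submatrix (fun x : {j : Fin n // j ≠ i} => (x : Fin n))
        (fun x : {j : Fin n // j ≠ i} => (x : Fin n)))) lam) ≤ Module.finrank ℝ ↥S := by
    refine LinearMap.finrank_le_finrank_of_injective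
      (f := (extMap i).restrict step1) ?_
    intro ⟨w, hw⟩ ⟨w', hw'⟩ h
    exact Subtype.ext (φinj (congrArg Subtype.val h))
  have h2 : Module.finrank ℝ ↥S < Module.finrank ℝ ↥K := by
    refine Submodule.finrank_lt_finrank_of_lt (lt_of_le_of_ne inf_le_left ?_)
    intro h
    have hvS : v ∈ S := by rw [h]; exact hv
    exact hvi (by simpa using (Submodule.mem_inf.mp hvS).2)
  exact lt_of_le_of_lt h1 h2

theorem extract_submatrix_with_eigenvalue (n m k : ℕ)
    (M : Matrix (Fin n) (Fin n) ℝ) (hM : M.IsSymm) (lam : ℝ)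
    (hlam : Module.End.HasEigenvalue (Matrix.toLin' M) lam)
    (hmult : Module.finrank ℝ
      ↥(Module.End.eigenspace (Matrix.toLin' M) lam) = m)
    (I : Finset (Fin n)) (hcard : I.card = k)
    (hdel : ∀ i ∈ I,
      Module.finrank ℝ
        ↥(Module.End.eigenspace
            (Matrix.toLin'
              (M.submatrix (fun x : {j : Fin n // j ≠ i} => (x : Fin n))
                (fun x : {j : Fin n // j ≠ i} => (x : Fin n)))) lam) = m ∨
      Module.finrank ℝ
        ↥(Module.End.eigenspace
            (Matrix.toLin'
              (M.submatrix (fun x : {j : Fin n // j ≠ i} => (x : Fin n))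
                (fun x : {j : Fin n // j ≠ i} => (x : Fin n)))) lam) = m + 1) :
    m ≤ Module.finrank ℝ
          ↥(Module.End.eigenspace
              (Matrix.toLin'
                (M.submatrix (fun x : {j : Fin n // j ∉ I} => (x : Fin n))
                  (fun x : {j : Fin n // j ∉ I} => (x : Fin n)))) lam) := by
  classical
  set K := Module.End.eigenspace (Matrix.toLin' M) lam with hK
  -- every eigenvector vanishes on I
  have vanish : ∀ v ∈ K, ∀ i ∈ I, v i = 0 := by
    intro v hv i hi
    by_contra h
    have hlt := key M hM lam i v hv h
    rw [hmult] at hlt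
    rcases hdel i hi with hd | hd <;> omega
  set resMap : (Fin n → ℝ) →ₗ[ℝ] ({j : Fin n // j ∉ I} → ℝ) :=
    LinearMap.funLeft ℝ ℝ (fun x : {j : Fin n // j ∉ I} => (x : Fin n)) with hres
  have hmem : ∀ v ∈ K, resMap v ∈ Module.End.eigenspace
      (Matrix.toLin' (M.submatrix (fun x : {j : Fin n // j ∉ I} => (x : Fin n))
        (fun x : {j : Fin n // j ∉ I} => (x : Fin n)))) lam := by
    intro v hv
    have hvmul : M.mulVec v = lam • v := by
      rw [hK, Module.End.mem_eigenspace_iff, Matrix.toLin'_apply] at hv; exact hv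
    rw [Module.End.mem_eigenspace_iff, Matrix.toLin'_apply]
    funext j
    have e2 : ∑ l ∈ Iᶜ, M ↑j l * v l = ∑ l : {l : Fin n // l ∉ I}, M ↑j ↑l * v ↑l :=
      Finset.sum_subtype _ (fun x => Finset.mem_compl) _
    have e1 : ∑ l ∈ Iᶜ, M ↑j l * v l = ∑ l : Fin n, M ↑j l * v l := by
      refine Finset.sum_subset (Finset.subset_univ _) ?_
      intro x _ hx
      rw [vanish v hv x (by simpa using hx)]; ring
    have e0 : M.mulVec v ↑j = ∑ l : Fin n, M ↑j l * v l := by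
      simp [Matrix.mulVec, dotProduct]
    have : ((M.submatrix (fun x : {j : Fin n // j ∉ I} => (x : Fin n))
        (fun x : {j : Fin n // j ∉ I} => (x : Fin n))).mulVec (resMap v)) j
        = ∑ l : {l : Fin n // l ∉ I}, M ↑j ↑l * v ↑l := by
      simp [Matrix.mulVec, dotProduct, Matrix.submatrix, hres, LinearMap.funLeft]
    rw [this, ← e2, e1, ← e0, hvmul]
    simp [hres, LinearMap.funLeft]
  refine hmult ▸ LinearMap.finrank_le_finrank_of_injective
    (f := resMap.restrict hmem) ?_
  intro ⟨v, hv⟩ ⟨v', hv'⟩ h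
  have h' := congrArg Subtype.val h
  refine Subtype.ext (funext fun j => ?_)
  show v j = v' j
  by_cases hj : j ∈ I
  · rw [vanish v hv j hj, vanish v' hv' j hj]
  · have := congrFun h' ⟨j, hj⟩
    simpa [LinearMap.restrict_apply, resMap, LinearMap.funLeft] using this
end

section
/- Let S be a Seidel matrix of order n odd. For every integer k ≥ 1, every off-diagonal entry of S^k is odd. -/
/-- A Seidel matrix of order `n`: a symmetric integer matrix with zero diagonal
and all off-diagonal entries `±1`. -/
def IsSeidel {n : ℕ} (S : Matrix (Fin n) (Fin n) ℤ) : Prop :=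
  S.IsSymm ∧ (∀ i, S i i = 0) ∧ ∀ i j, i ≠ j → S i j = 1 ∨ S i j = -1

theorem seidel_pow_offdiag_odd (n : ℕ) (hn : Odd n)
    (S : Matrix (Fin n) (Fin n) ℤ) (hS : IsSeidel S) :
    ∀ k : ℕ, 1 ≤ k → ∀ i j : Fin n, i ≠ j → Odd ((S ^ k) i j) := by
  obtain ⟨-, hdiag, hoff⟩ := hS
  set f := (RingHom.mapMatrix (Int.castRingHom (ZMod 2)) : Matrix (Fin n) (Fin n) ℤ →+* Matrix (Fin n) (Fin n) (ZMod 2))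
  set A : Matrix (Fin n) (Fin n) (ZMod 2) := f S with hA
  have hnc : (n : ZMod 2) = 1 := by
    obtain ⟨m, rfl⟩ := hn
    push_cast
    have h2 : (2 : ZMod 2) = 0 := by decide
    rw [h2]
    ring
  -- J : all-ones
  set J : Matrix (Fin n) (Fin n) (ZMod 2) := Matrix.of (fun _ _ => 1) with hJ
  have hJJ : J * J = J := by
    ext i j
    simp [hJ, Matrix.mul_apply, Finset.sum_const, hnc]
  have hAval : A = 1 + J := by
    ext i j
    by_cases h : i = j
    · subst h
      simp [hA, f, hJ, Matrix.one_apply, hdiag i]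
      decide
    · rcases hoff i j h with h1 | h1 <;>
        simp [hA, f, hJ, Matrix.one_apply, h, h1] <;>
        decide
  have key : ∀ k : ℕ, 1 ≤ k → A ^ k = 1 + J := by
    intro k hk
    induction k with
    | zero => omega
    | succ m ih =>
      rcases Nat.eq_or_lt_of_le hk with h | h
      · simp [← h, hAval]
      · have hm : 1 ≤ m := by omega
        rw [pow_succ, ih hm, hAval]
        have hJ0 : J + J = 0 := by
          ext i j; simp [hJ]; decide
        have : (1 + J) * (1 + J) = 1 + ((J + J) + J * J) := by noncomm_ring
        rw [this, hJ0, hJJ, zero_add]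
  intro k hk i j hij
  have hcast : ((S ^ k) i j : ZMod 2) = 1 := by
    have : f (S ^ k) = A ^ k := by rw [map_pow]
    have h2 : f (S ^ k) i j = (1 + J) i j := by rw [this, key k hk]
    simpa [f, hJ, Matrix.one_apply, hij] using h2
  rw [Int.odd_iff]
  by_contra h
  have h0 : (S ^ k) i j % 2 = 0 := by omega
  have : ((S ^ k) i j : ZMod 2) = 0 := by
    have := Int.emod_emod_of_dvd ((S ^ k) i j) (dvd_refl 2)
    rw [ZMod.intCast_zmod_eq_zero_iff_dvd]
    omega
  rw [this] at hcast
  exact absurd hcast (by decide)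
end

section
/- Let S be a Seidel matrix of order n odd with underlying graph an Euler graph (all vertex degrees even), S = J − I − 2A, and let λ, μ, ν be integers with λ, μ odd. Then (S − λI)(S − μI)(S − νI) ≡ (n − 2 − λ − μ)(n − 1 − ν)·J modulo 4 entrywise. -/
theorem euler_cubic_mod_four (n : ℕ) (hn : Odd n)
    (A : Matrix (Fin n) (Fin n) ℤ) (hAsymm : A.IsSymm)
    (hAdiag : ∀ i, A i i = 0) (hA01 : ∀ i j, A i j = 0 ∨ A i j = 1)
    (S : Matrix (Fin n) (Fin n) ℤ)
    (hS : S = Matrix.of (fun _ _ => (1 : ℤ)) - 1 - 2 • A)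
    (heuler : ∀ i, Even (∑ j, A i j))
    (lam mu nu : ℤ) (hlam : Odd lam) (hmu : Odd mu) :
    ∀ i j, Int.ModEq 4 (((S - lam • 1) * (S - mu • 1) * (S - nu • 1)) i j)
      (((n : ℤ) - 2 - lam - mu) * ((n : ℤ) - 1 - nu)) := by
  set f := Int.castRingHom (ZMod 4) with hf
  set B : Matrix (Fin n) (Fin n) (ZMod 4) := A.map f with hB
  set K : Matrix (Fin n) (Fin n) (ZMod 4) := Matrix.of (fun _ _ => (1 : ZMod 4)) with hK
  have h4 : (4 : ZMod 4) = 0 := by decide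
  have hKK : K * K = (n : ZMod 4) • K := by
    ext i j
    simp [hK, Matrix.mul_apply, Matrix.smul_apply, Finset.sum_const, Finset.card_univ]
  have hKB : (2 : ZMod 4) • (K * B) = 0 := by
    ext i j
    obtain ⟨t, ht⟩ := heuler j
    have hcol : ∑ k, A k j = t + t := by
      rw [← ht]
      exact Finset.sum_congr rfl (fun k _ => (hAsymm.apply k j).symm)
    simp only [Matrix.smul_apply, Matrix.mul_apply, hK, hB, Matrix.of_apply,
      Matrix.map_apply, one_mul, Matrix.zero_apply]
    rw [show ∀ x : Fin n → ℤ, (∑ k, f (x k)) = f (∑ k, x k) from fun x => (map_sum f x _).symm]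
    rw [hcol]
    have : f (t + t) = 2 * (t : ZMod 4) := by
      show ((t + t : ℤ) : ZMod 4) = 2 * (t : ZMod 4)
      push_cast; ring
    rw [this, smul_eq_mul, show (2:ZMod 4) * (2 * (t:ZMod 4)) = 4 * t by ring, h4, zero_mul]
  have hBK : (2 : ZMod 4) • (B * K) = 0 := by
    ext i j
    obtain ⟨t, ht⟩ := heuler i
    simp only [Matrix.smul_apply, Matrix.mul_apply, hK, hB, Matrix.of_apply,
      Matrix.map_apply, mul_one, Matrix.zero_apply]
    rw [show ∀ x : Fin n → ℤ, (∑ k, f (x k)) = f (∑ k, x k) from fun x => (map_sum f x _).symm]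
    rw [ht]
    have : f (t + t) = 2 * (t : ZMod 4) := by
      show ((t + t : ℤ) : ZMod 4) = 2 * (t : ZMod 4)
      push_cast; ring
    rw [this, smul_eq_mul, show (2:ZMod 4) * (2 * (t:ZMod 4)) = 4 * t by ring, h4, zero_mul]
  have hstep : ∀ x y : ZMod 4,
      (K - (2*x) • 1 - (2:ZMod 4) • B) * (K - (2*y) • 1 - (2:ZMod 4) • B)
        = ((n : ZMod 4) - 2*x - 2*y) • K := by
    intro x y
    simp only [sub_mul, mul_sub, smul_sub, Matrix.mul_smul, Matrix.smul_mul, smul_smul,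
      Matrix.mul_one, Matrix.one_mul]
    rw [show (2*y) * (2*x) = 4 * (y*x) by ring, show ((2:ZMod 4)*y) * 2 = 4 * y by ring,
      show (2:ZMod 4) * (2*x) = 4 * x by ring, show (2:ZMod 4) * 2 = (4:ZMod 4) * 1 by ring,
      h4, hKK, hKB, hBK]
    simp only [zero_mul, zero_smul, sub_zero, zero_sub, neg_neg, neg_zero]
    module
  have hfin : ∀ c e : ZMod 4,
      (c • K) * (K - e • 1 - (2:ZMod 4) • B) = (c * ((n:ZMod 4) - e)) • K := by
    intro c e
    simp only [mul_sub, smul_sub, Matrix.mul_smul, Matrix.smul_mul, smul_smul,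
      Matrix.mul_one]
    rw [hKK, show ((2:ZMod 4) * c) = c * 2 from mul_comm _ _,
      show (c * 2) • (K * B) = c • ((2:ZMod 4) • (K * B)) from (smul_smul c 2 (K*B)).symm,
      hKB, smul_zero, sub_zero, smul_smul]
    module
  have hmapf : ∀ r : ℤ, (S - r • 1).map f
      = K - ((1:ZMod 4) + (r:ZMod 4)) • 1 - (2:ZMod 4) • B := by
    intro r
    subst hS
    ext i j
    simp only [Matrix.map_apply, Matrix.sub_apply, Matrix.smul_apply, Matrix.one_apply,
      Matrix.of_apply, hB, hK, hf, Int.coe_castRingHom]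
    split_ifs <;> push_cast [nsmul_eq_mul, smul_eq_mul] <;> ring
  intro i j
  obtain ⟨a, ha⟩ := hlam
  obtain ⟨b, hb⟩ := hmu
  have h1 : ((1:ZMod 4) + (lam : ZMod 4)) = 2 * ((a : ZMod 4) + 1) := by
    rw [ha]; push_cast; ring
  have h2 : ((1:ZMod 4) + (mu : ZMod 4)) = 2 * ((b : ZMod 4) + 1) := by
    rw [hb]; push_cast; ring
  have key : (((S - lam • 1) * (S - mu • 1) * (S - nu • 1)).map f) i j
      = (((n:ZMod 4) - 2 - lam - mu) * ((n:ZMod 4) - 1 - nu)) := by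
    rw [Matrix.map_mul, Matrix.map_mul, hmapf, hmapf, hmapf, h1, h2, hstep, hfin]
    simp only [Matrix.smul_apply, hK, Matrix.of_apply, smul_eq_mul, mul_one]
    rw [← h1, ← h2, ha, hb]
    push_cast
    ring
  refine (ZMod.intCast_eq_intCast_iff _ _ 4).mp ?_
  rw [show (((S - lam • 1) * (S - mu • 1) * (S - nu • 1)) i j : ZMod 4)
        = (((S - lam • 1) * (S - mu • 1) * (S - nu • 1)).map f) i j from rfl, key]
  push_cast
  ring
end

section
/- Let S be a Seidel matrix of order n odd, S = J − I − 2A, and let λ, μ, ν be integers with λ, μ odd. If both (S − λI)(S − μI) ≡ (n − 2 − λ − μ)J (mod 4) and (S − λI)(S − μI)(S − νI) ≡ (n − 2 − λ − μ)(n − 1 − ν)J (mod 4) hold entrywise, then every row sum of A is even (i.e., the underlying graph of S is an Euler graph). -/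
theorem euler_of_mod_four_congruences (n : ℕ) (hn : Odd n)
    (A : Matrix (Fin n) (Fin n) ℤ) (hAsymm : A.IsSymm)
    (hAdiag : ∀ i, A i i = 0) (hA01 : ∀ i j, A i j = 0 ∨ A i j = 1)
    (S : Matrix (Fin n) (Fin n) ℤ)
    (hS : S = Matrix.of (fun _ _ => (1 : ℤ)) - 1 - 2 • A)
    (lam mu nu : ℤ) (hlam : Odd lam) (hmu : Odd mu)
    (hquad : ∀ i j, Int.ModEq 4 (((S - lam • 1) * (S - mu • 1)) i j)
      ((n : ℤ) - 2 - lam - mu))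
    (hcubic : ∀ i j,
      Int.ModEq 4 (((S - lam • 1) * (S - mu • 1) * (S - nu • 1)) i j)
        (((n : ℤ) - 2 - lam - mu) * ((n : ℤ) - 1 - nu))) :
    ∀ i, Even (∑ j, A i j) := by
  intro i
  set c : ℤ := (n : ℤ) - 2 - lam - mu with hc
  set d : ℤ := ∑ j, A i j with hdd
  have hcodd : Odd c := by
    obtain ⟨k, hk⟩ := hn
    obtain ⟨a, ha⟩ := hlam
    obtain ⟨b, hb⟩ := hmu
    exact ⟨(k : ℤ) - a - b - 2, by rw [hc, ha, hb, hk]; push_cast; ring⟩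
  -- column sum of S - nu • 1 at i
  have hAsym : ∀ k : Fin n, A k i = A i k := fun k => by
    conv_lhs => rw [← hAsymm]
    rfl
  have hsum : ∑ k, (S - nu • (1 : Matrix (Fin n) (Fin n) ℤ)) k i
      = (n : ℤ) - 1 - nu - 2 * d := by
    have h1 : ∑ k : Fin n, A k i = d := by
      rw [hdd]; exact Finset.sum_congr rfl fun k _ => hAsym k
    have h2 : ∀ k : Fin n, (S - nu • (1 : Matrix (Fin n) (Fin n) ℤ)) k i
        = 1 - (if k = i then (1:ℤ) else 0) - 2 * A k i
          - nu * (if k = i then (1:ℤ) else 0) := by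
      intro k
      subst hS
      simp only [Matrix.sub_apply, Matrix.smul_apply, Matrix.of_apply,
        Matrix.one_apply, smul_eq_mul]
      simp only [nsmul_eq_mul]
      push_cast
      split <;> ring
    rw [Finset.sum_congr rfl fun k _ => h2 k]
    rw [Finset.sum_sub_distrib, Finset.sum_sub_distrib, Finset.sum_sub_distrib,
      ← Finset.mul_sum, ← Finset.mul_sum, h1]
    simp [Finset.sum_ite_eq', Finset.card_univ]
    ring
  have key : (4:ℤ) ∣ (((S - lam • 1) * (S - mu • 1) * (S - nu • 1)) i i
      - c * ((n : ℤ) - 1 - nu - 2 * d)) := by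
    rw [Matrix.mul_apply, ← hsum, Finset.mul_sum, ← Finset.sum_sub_distrib]
    refine Finset.dvd_sum fun k _ => ?_
    have h := Int.ModEq.dvd (hquad i k)
    obtain ⟨t, ht⟩ := h
    have : ((S - lam • 1) * (S - mu • 1)) i k * (S - nu • 1) k i
        - c * (S - nu • 1) k i
        = -(4 * t) * (S - nu • 1) k i := by
      rw [← sub_mul]
      have : ((S - lam • 1) * (S - mu • 1)) i k - c = -(4 * t) := by omega
      rw [this]
    rw [this]
    exact ⟨-t * (S - nu • 1) k i, by ring⟩
  have key2 : (4:ℤ) ∣ (c * ((n : ℤ) - 1 - nu)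
      - ((S - lam • 1) * (S - mu • 1) * (S - nu • 1)) i i) := by
    have := Int.ModEq.dvd (hcubic i i)
    obtain ⟨t, ht⟩ := this
    exact ⟨t, by omega⟩
  have h2cd : (4:ℤ) ∣ 2 * (c * d) := by
    have := dvd_add key key2
    have heq : ((S - lam • 1) * (S - mu • 1) * (S - nu • 1)) i i
        - c * ((n : ℤ) - 1 - nu - 2 * d)
        + (c * ((n : ℤ) - 1 - nu)
          - ((S - lam • 1) * (S - mu • 1) * (S - nu • 1)) i i)
        = 2 * (c * d) := by ring
    rwa [heq] at this
  have hcd : (2:ℤ) ∣ c * d := by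
    obtain ⟨t, ht⟩ := h2cd
    exact ⟨t, by omega⟩
  have hev : Even (c * d) := by
    obtain ⟨t, ht⟩ := hcd
    exact ⟨t, by omega⟩
  rcases Int.even_mul.mp hev with h | h
  · exact (Int.not_even_iff_odd.mpr hcodd h).elim
  · exact h
end

section
/- Let S be a Seidel matrix of order n and k an odd integer. Then the shifted characteristic polynomial Char_S(x + k) is weakly type 2; moreover, if n is even, then Char_S(x + k) is type 2. -/
open Polynomial

/-! Substituting `x ↦ 2x` multiplies the coefficient of `x ^ j` by `2 ^ j`, so it suffices to
show that `Char_S(2x + k) = det (2xI + kI - S)` is divisible by `2 ^ (n - 1)`, and by `2 ^ n`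
when `n` is even. Every entry of `2xI + kI - S` is congruent to `k` modulo `2`, so the matrix is
`k J + 2 N` with `N` symmetric of constant diagonal. Subtracting the first row from the others
extracts `2 ^ (n - 1)`. For even `n`, subtracting also the first column leaves, modulo `2`, the
first row `(k, 0, …, 0)` above a symmetric matrix of odd order with zero diagonal; its determinant
vanishes in characteristic `2`, since `σ` and `σ⁻¹` contribute equal terms and every involution
of an odd set has a fixed point. -/

open Matrix

theorem Equiv.Perm.exists_fixed_of_involutive {α : Type*} [Fintype α]
    (hα : Odd (Fintype.card α)) {σ : Equiv.Perm α} (hσ : σ * σ = 1) : ∃ a, σ a = a :=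
  Equiv.Perm.exists_fixed_point_of_prime (p := 2) (n := 1) hα.not_two_dvd_nat
    (by rwa [pow_one, sq])

namespace Matrix

variable {R : Type*} [CommRing R] {ι : Type*} [Fintype ι] [DecidableEq ι] {m : ℕ}

theorem det_eq_zero_of_isSymm_of_two_eq_zero (h2 : (2 : R) = 0) (hι : Odd (Fintype.card ι))
    {M : Matrix ι ι R} (hM : M.IsSymm) (hdiag : ∀ i, M i i = 0) : M.det = 0 := by
  rw [det_apply]
  refine Finset.sum_involution (fun σ _ => σ⁻¹) (fun σ _ => ?_) (fun σ _ hσ => ?_)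
    (fun σ _ => Finset.mem_univ _) (fun σ _ => inv_inv σ)
  · have hprod : ∏ i, M (σ⁻¹ i) i = ∏ i, M (σ i) i := by
      rw [← Equiv.prod_comp σ]
      simp only [Equiv.Perm.inv_def, Equiv.symm_apply_apply]
      exact Finset.prod_congr rfl fun i _ => hM.apply (σ i) i
    rw [Equiv.Perm.sign_inv, hprod, ← two_smul R, smul_comm, h2, zero_smul, smul_zero]
  · contrapose! hσ
    obtain ⟨i, hi⟩ :=
      Equiv.Perm.exists_fixed_of_involutive hι (mul_eq_one_iff_eq_inv.mpr hσ.symm)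
    rw [Finset.prod_eq_zero (Finset.mem_univ i) (by rw [hi, hdiag]), smul_zero]

/-- `of fun i j => a + d * N i j` with row `0` subtracted from every other row, and `d` cancelled
from those rows. -/
def rowReduce (a d : R) (N : Matrix (Fin (m + 1)) (Fin (m + 1)) R) :
    Matrix (Fin (m + 1)) (Fin (m + 1)) R :=
  of fun i j => if i = 0 then a + d * N 0 j else N i j - N 0 j

theorem det_const_add_mul_eq_pow_mul_det_rowReduce (a d : R)
    (N : Matrix (Fin (m + 1)) (Fin (m + 1)) R) :
    det (of fun i j => a + d * N i j) = d ^ m * det (rowReduce a d N) := by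
  have hrows : det (of fun i j => a + d * N i j) =
      det (of fun i j => (if i = 0 then 1 else d) * rowReduce a d N i j) := by
    refine det_eq_of_forall_row_eq_smul_add_const (fun i => if i = 0 then 0 else 1) 0
      (if_pos rfl) fun i j => ?_
    by_cases hi : i = 0
    · simp [hi, rowReduce]
    · simp [hi, rowReduce]
      ring
  rw [hrows, det_mul_column, Fin.prod_univ_succ]
  simp [Fin.succ_ne_zero]

theorem pow_pred_dvd_det_const_add_mul {n : ℕ} (a d : R) (N : Matrix (Fin n) (Fin n) R) :
    d ^ (n - 1) ∣ det (of fun i j => a + d * N i j) := by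
  cases n with
  | zero => simp
  | succ m => exact ⟨_, det_const_add_mul_eq_pow_mul_det_rowReduce a d N⟩

theorem det_rowReduce_two_eq_zero (h2 : (2 : R) = 0) (hm : Odd m) (a : R)
    {N : Matrix (Fin (m + 1)) (Fin (m + 1)) R} (hN : N.IsSymm) (hdiag : ∀ i j, N i i = N j j) :
    det (rowReduce a 2 N) = 0 := by
  set F := rowReduce a 2 N
  set G : Matrix (Fin (m + 1)) (Fin (m + 1)) R :=
    of fun i j => if j = 0 then F i 0 else F i j - F i 0 with hG
  have hcols : det F = det G := by
    rw [← det_transpose F, ← det_transpose G]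
    refine det_eq_of_forall_row_eq_smul_add_const (fun j => if j = 0 then 0 else 1) 0
      (if_pos rfl) fun j i => ?_
    by_cases hj : j = 0 <;> simp [hG, hj]
  have hminor : (G.submatrix Fin.succ Fin.succ).det = 0 := by
    refine det_eq_zero_of_isSymm_of_two_eq_zero h2 (by simpa using hm) ?_ fun i => ?_
    · ext i j
      simp [hG, F, rowReduce, Fin.succ_ne_zero, hN.apply i.succ j.succ, hN.apply 0 j.succ,
        hN.apply 0 i.succ]
      ring
    · simp [hG, F, rowReduce, Fin.succ_ne_zero, hN.apply 0 i.succ, hdiag i.succ 0]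
      linear_combination (N 0 0 - N 0 i.succ) * h2
  rw [hcols, det_succ_row_zero, Fin.sum_univ_succ, Finset.sum_eq_zero]
  · simp [hminor]
  · intro j _
    simp [hG, F, rowReduce, Fin.succ_ne_zero, h2]

theorem two_pow_dvd_det_const_add_two_mul {n : ℕ} (hn : Even n) (a : R)
    {N : Matrix (Fin n) (Fin n) R} (hN : N.IsSymm) (hdiag : ∀ i j, N i i = N j j) :
    2 ^ n ∣ det (of fun i j => a + 2 * N i j) := by
  cases n with
  | zero => simp
  | succ m =>
    have hm : Odd m := by simpa [Nat.even_add_one] using hn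
    let π := Ideal.Quotient.mk (Ideal.span {(2 : R)})
    have h2 : (2 : R ⧸ Ideal.span {(2 : R)}) = 0 := by
      rw [← map_ofNat π 2]
      exact Ideal.Quotient.mk_singleton_self 2
    have hreduce : π.mapMatrix (rowReduce a 2 N) = rowReduce (π a) 2 (N.map π) := by
      ext i j
      by_cases hi : i = 0 <;> simp [rowReduce, π, hi, h2]
    have hdvd : 2 ∣ det (rowReduce a 2 N) := by
      rw [← Ideal.Quotient.eq_zero_iff_dvd, RingHom.map_det, hreduce]
      exact det_rowReduce_two_eq_zero h2 hm _ (hN.map π) fun i j => by simp [hdiag i j]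
    rw [det_const_add_mul_eq_pow_mul_det_rowReduce, pow_succ]
    exact mul_dvd_mul_left _ hdvd

theorem charpoly_comp_eq_det {n : Type*} [Fintype n] [DecidableEq n] (M : Matrix n n R)
    (p : R[X]) : M.charpoly.comp p = (scalar n p - M.map C).det := by
  rw [charpoly, ← coe_compRingHom_apply, RingHom.map_det]
  congr 1
  ext i j
  by_cases hij : i = j
  · subst hij; simp [charmatrix_apply_eq]
  · simp [hij]

end Matrix

theorem Polynomial.pow_sub_dvd_coeff_of_dvd_comp {R : Type*} [CommRing R] [IsDomain R]
    {d : R} (hd : d ≠ 0) {q : R[X]} {e : ℕ} (h : C d ^ e ∣ q.comp (C d * X)) (j : ℕ) :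
    d ^ (e - j) ∣ q.coeff j := by
  rw [← C_pow, C_dvd_iff_dvd_coeff] at h
  have hj := h j
  rw [comp_C_mul_X_coeff] at hj
  rcases le_total j e with hje | hej
  · rw [← Nat.add_sub_cancel' hje, pow_add, mul_comm] at hj
    simpa [Nat.add_sub_cancel_left] using (mul_dvd_mul_iff_right (pow_ne_zero j hd)).mp hj
  · simp [Nat.sub_eq_zero_of_le hej]

theorem IsSeidel.exists_scalar_sub_eq {n : ℕ} {S : Matrix (Fin n) (Fin n) ℤ} (hS : IsSeidel S)
    {k : ℤ} (hk : Odd k) :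
    ∃ N : Matrix (Fin n) (Fin n) ℤ[X], N.IsSymm ∧ (∀ i j, N i i = N j j) ∧
      scalar (Fin n) (C 2 * X) - (S - scalar (Fin n) k).map C = of fun i j => C k + 2 * N i j := by
  obtain ⟨hsymm, hdiag, hoff⟩ := hS
  have hdvd : ∀ i j, i ≠ j → 2 ∣ -S i j - k := fun i j hij => by
    obtain ⟨t, rfl⟩ := hk
    rcases hoff i j hij with h | h <;> rw [h] <;> omega
  refine ⟨of fun i j => if i = j then X else C ((-S i j - k) / 2), ?_, fun i j => by simp, ?_⟩
  · ext i j
    by_cases hij : i = j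
    · simp [hij]
    · simp [hij, Ne.symm hij, hsymm.apply i j]
  · ext i j : 1
    by_cases hij : i = j
    · subst hij
      simp only [Matrix.sub_apply, scalar_apply, diagonal_apply_eq, map_apply, of_apply, if_pos,
        hdiag]
      simp [add_comm]
    · simp only [Matrix.sub_apply, scalar_apply, diagonal_apply_ne _ hij, map_apply, of_apply,
        if_neg hij]
      rw [← C_ofNat, ← C_mul, Int.mul_ediv_cancel' (hdvd i j hij), ← C_add]
      simp

theorem seidel_shifted_charpoly_type2 (n : ℕ)
    (S : Matrix (Fin n) (Fin n) ℤ) (hS : IsSeidel S) (k : ℤ) (hk : Odd k) :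
    IsWeaklyType2 (S.charpoly.comp (X + C k)) ∧
      (Even n → IsType2 (S.charpoly.comp (X + C k))) := by
  rw [← charpoly_sub_scalar]
  have hdeg : (S - scalar (Fin n) k).charpoly.natDegree = n := by
    simp [charpoly_natDegree_eq_dim]
  obtain ⟨N, hN, hdiag, hdet⟩ := hS.exists_scalar_sub_eq hk
  have hcoeff : ∀ e, 2 ^ e ∣ det (of fun i j => C k + 2 * N i j) →
      ∀ j, (2 : ℤ) ^ (e - j) ∣ (S - scalar (Fin n) k).charpoly.coeff j := fun e he =>
    pow_sub_dvd_coeff_of_dvd_comp two_ne_zero (by rwa [charpoly_comp_eq_det, hdet, C_ofNat])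
  refine ⟨fun j _ => ?_, fun hn j _ => ?_⟩
  · rw [hdeg, Nat.sub_right_comm]
    exact hcoeff _ (pow_pred_dvd_det_const_add_mul _ _ N) j
  · rw [hdeg]
    exact hcoeff _ (two_pow_dvd_det_const_add_two_mul hn _ hN hdiag) j
end
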